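/- Let μ be a probability measure on ℝ with finite second moment. Define F(t,y) = ∫_ℝ exp(uy − u²t/2) μ(du), G(t,y) = (∫_ℝ u exp(uy − u²t/2) μ(du))/F(t,y), and H(t,y) = (∫_ℝ u² exp(uy − u²t/2) μ(du))/F(t,y) − G(t,y)². Then on the strip (0,∞) × ℝ the function H satisfies the equation ∂_t H + (1/2) ∂²_{yy} H + G · ∂_y H + H² = 0. -/

import Mathlib

/-!
With `M_k(t,y) = ∫ u^k exp(u y - u² t/2) μ(du)`, differentiation under the integral gives
`∂_y M_k = M_{k+1}` and `∂_t M_k = -M_{k+2}/2`, justified for `t > 0` because the Gaussian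
factor dominates every polynomial, locally uniformly in `(t, y)`. Hence the posterior moments
`p_k = M_k / M_0` satisfy `∂_y p_k = p_{k+1} - p_1 p_k` and `∂_t p_k = -(p_{k+2} - p_2 p_k)/2`.
Since `G = p_1` and `H = p_2 - p_1²`, both sides of the equation are polynomials in
`p_1, …, p_4`, and the equation is a ring identity.
-/

open MeasureTheory ProbabilityTheory Real Filter Set
open scoped ENNReal NNReal

noncomputable section

/-- The Gaussian likelihood kernel `exp(u y - u^2 t / 2)`. -/
def gker (t y u : ℝ) : ℝ := Real.exp (u * y - u ^ 2 * t / 2)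

/-- The Widder transform `F(t,y) = ∫ exp(u y - u² t/2) μ(du)` of the measure `μ`. -/
def Fw (μ : Measure ℝ) (t y : ℝ) : ℝ := ∫ u, gker t y u ∂μ

/-- The posterior-mean function `G(t,y)`. -/
def Gp (μ : Measure ℝ) (t y : ℝ) : ℝ := (∫ u, u * gker t y u ∂μ) / Fw μ t y

/-- The posterior-variance function `H(t,y)`. -/
def Hp (μ : Measure ℝ) (t y : ℝ) : ℝ :=
  (∫ u, u ^ 2 * gker t y u ∂μ) / Fw μ t y - (Gp μ t y) ^ 2

/-- The (topological) support of a measure on `ℝ`. -/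
def msupport (μ : Measure ℝ) : Set ℝ := {x | ∀ U ∈ nhds x, μ U ≠ 0}

/-- `I_μ`: the interior of the smallest closed interval containing the support of `μ`,
i.e. the open interval `(inf (supp μ), sup (supp μ))`. -/
def Imu (μ : Measure ℝ) : Set ℝ := interior (convexHull ℝ (msupport μ))

/-- The dispersion function in estimate coordinates: `Ψ(t,x) = H(t, G(t,·)⁻¹(x))`. -/
def Psi (μ : Measure ℝ) (t x : ℝ) : ℝ := Hp μ t (Function.invFun (Gp μ t) x)

/-- The natural sigma-algebra generated by the observation process `Y` up to time `t`. -/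
def natSigma {Ω : Type*} [MeasurableSpace Ω] (Y : ℝ → Ω → ℝ) (t : ℝ) : MeasurableSpace Ω :=
  ⨆ s ∈ Set.Icc (0 : ℝ) t, MeasurableSpace.comap (Y s) inferInstance

/-- The right-continuous augmentation `F^Y(t) = ⋂_{s > t} σ(Y_r, r ≤ s)`
of the filtration generated by `Y`. -/
def obsFiltration {Ω : Type*} [MeasurableSpace Ω] (Y : ℝ → Ω → ℝ) (t : ℝ) :
    MeasurableSpace Ω :=
  ⨅ s ∈ Set.Ioi t, natSigma Y s

/-- A process `W` is a standard Brownian motion under the probability measure `P`: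
it starts at `0`, has continuous paths, Gaussian increments `W t - W s ~ N(0, t - s)`,
and independent increments. -/
structure IsStdBM {Ω : Type*} [MeasurableSpace Ω] (P : Measure Ω) (W : ℝ → Ω → ℝ) : Prop where
  measurable : ∀ t : ℝ, Measurable (W t)
  init : ∀ ω, W 0 ω = 0
  cont : ∀ ω, Continuous fun t => W t ω
  incrLaw : ∀ ⦃s t : ℝ⦄, 0 ≤ s → s ≤ t →
    Measure.map (fun ω => W t ω - W s ω) P = gaussianReal 0 (Real.toNNReal (t - s))
  indepIncr : ∀ (n : ℕ) (ts : Fin (n + 1) → ℝ), Monotone ts → 0 ≤ ts 0 →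
    iIndepFun (fun (i : Fin n) ω => W (ts i.succ) ω - W (ts i.castSucc) ω) P

/-- A stopping time of the observation filtration `F^Y`:
`{τ ≤ t} ∈ F^Y(t)` for every `t`. -/
def IsObsStoppingTime {Ω : Type*} [MeasurableSpace Ω] (Y : ℝ → Ω → ℝ) (τ : Ω → ℝ) : Prop :=
  ∀ t : ℝ, MeasurableSet[obsFiltration Y t] {ω | τ ω ≤ t}

lemma abs_pow_mul_gker_le (k : ℕ) {a c t y u : ℝ} (ha : 0 < a) (hc : |y| ≤ c) (hat : a ≤ t) :
    |u ^ k * gker t y u| ≤ k.factorial * exp ((c + 1) ^ 2 / (2 * a)) := by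
  have hc0 : 0 ≤ c := (abs_nonneg y).trans hc
  have h_exponent : u * y - u ^ 2 * t / 2 ≤ |u| * c - u ^ 2 * a / 2 := by
    have : u * y ≤ |u| * c := (le_abs_self _).trans <| by
      rw [abs_mul]; exact mul_le_mul_of_nonneg_left hc (abs_nonneg u)
    nlinarith [sq_nonneg u]
  have h_pow : |u| ^ k ≤ k.factorial * exp |u| := by
    have := pow_div_factorial_le_exp _ (abs_nonneg u) k
    rwa [div_le_iff₀ (by positivity), mul_comm] at this
  -- complete the square: `a |u|² - 2 (c + 1) |u| + (c + 1)² / a ≥ 0`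
  have h_square : |u| + (|u| * c - u ^ 2 * a / 2) ≤ (c + 1) ^ 2 / (2 * a) := by
    rw [le_div_iff₀ (by positivity), ← sq_abs u]
    nlinarith [sq_nonneg (a * |u| - (c + 1))]
  calc |u ^ k * gker t y u| = |u| ^ k * exp (u * y - u ^ 2 * t / 2) := by
        rw [abs_mul, abs_pow, gker, abs_of_pos (exp_pos _)]
    _ ≤ (k.factorial * exp |u|) * exp (|u| * c - u ^ 2 * a / 2) :=
        mul_le_mul h_pow (exp_le_exp.2 h_exponent) (exp_pos _).le (by positivity)
    _ = k.factorial * exp (|u| + (|u| * c - u ^ 2 * a / 2)) := by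
        rw [mul_assoc, ← exp_add]
    _ ≤ k.factorial * exp ((c + 1) ^ 2 / (2 * a)) := by gcongr

lemma continuous_pow_mul_gker (k : ℕ) (t y : ℝ) : Continuous fun u : ℝ => u ^ k * gker t y u := by
  unfold gker; fun_prop

lemma hasDerivAt_gker_space (t y u : ℝ) : HasDerivAt (fun z => gker t z u) (u * gker t y u) y := by
  have h : HasDerivAt (fun z : ℝ => u * z - u ^ 2 * t / 2) u y := by
    simpa using ((hasDerivAt_id y).const_mul u).sub_const (u ^ 2 * t / 2)
  exact h.exp.congr_deriv (by rw [gker, mul_comm])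

lemma hasDerivAt_gker_time (t y u : ℝ) :
    HasDerivAt (fun s => gker s y u) (-(u ^ 2 / 2) * gker t y u) t := by
  have h : HasDerivAt (fun s : ℝ => u * y - u ^ 2 * s / 2) (-(u ^ 2 / 2)) t := by
    simpa using (((hasDerivAt_id t).const_mul (u ^ 2)).div_const 2).const_sub (u * y)
  exact h.exp.congr_deriv (by rw [gker, mul_comm])

def widderMoment (μ : Measure ℝ) (k : ℕ) (t y : ℝ) : ℝ := ∫ u, u ^ k * gker t y u ∂μ

def posteriorMoment (μ : Measure ℝ) (k : ℕ) (t y : ℝ) : ℝ :=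
  widderMoment μ k t y / widderMoment μ 0 t y

lemma Gp_eq_posteriorMoment (μ : Measure ℝ) (t y : ℝ) : Gp μ t y = posteriorMoment μ 1 t y := by
  simp [Gp, Fw, posteriorMoment, widderMoment]

lemma Hp_eq_posteriorMoment (μ : Measure ℝ) (t y : ℝ) :
    Hp μ t y = posteriorMoment μ 2 t y - posteriorMoment μ 1 t y ^ 2 := by
  simp [Hp, Gp, Fw, posteriorMoment, widderMoment]

section FiniteMeasure

variable (μ : Measure ℝ) [IsFiniteMeasure μ] (k : ℕ) {t : ℝ} (ht : 0 < t) (y : ℝ)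
include ht

lemma integrable_pow_mul_gker : Integrable (fun u => u ^ k * gker t y u) μ :=
  (integrable_const ((k.factorial : ℝ) * exp ((|y| + 1) ^ 2 / (2 * t)))).mono'
    (continuous_pow_mul_gker k t y).aestronglyMeasurable
    (ae_of_all _ fun _ => abs_pow_mul_gker_le k ht le_rfl le_rfl)

lemma hasDerivAt_widderMoment_space :
    HasDerivAt (fun z => widderMoment μ k t z) (widderMoment μ (k + 1) t y) y := by
  refine (hasDerivAt_integral_of_dominated_loc_of_deriv_le (μ := μ)
    (F' := fun z u => u ^ (k + 1) * gker t z u)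
    (bound := fun _ => (k + 1).factorial * exp ((|y| + 1 + 1) ^ 2 / (2 * t)))
    (Metric.ball_mem_nhds y one_pos)
    (.of_forall fun z => (continuous_pow_mul_gker k t z).aestronglyMeasurable)
    (integrable_pow_mul_gker μ k ht y)
    (continuous_pow_mul_gker (k + 1) t y).aestronglyMeasurable
    (ae_of_all _ fun u z hz => abs_pow_mul_gker_le (k + 1) ht ?_ le_rfl)
    (integrable_const _)
    (ae_of_all _ fun u z _ => ((hasDerivAt_gker_space t z u).const_mul (u ^ k)).congr_deriv
      (by ring))).2
  rw [Metric.mem_ball, Real.dist_eq] at hz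
  linarith [abs_sub_abs_le_abs_sub z y]

lemma hasDerivAt_widderMoment_time :
    HasDerivAt (fun s => widderMoment μ k s y) (-(1 / 2) * widderMoment μ (k + 2) t y) t := by
  have ht2 : 0 < t / 2 := half_pos ht
  have h := (hasDerivAt_integral_of_dominated_loc_of_deriv_le (μ := μ)
    (F' := fun s u => -(1 / 2) * (u ^ (k + 2) * gker s y u))
    (bound := fun _ => (1 / 2) * ((k + 2).factorial * exp ((|y| + 1) ^ 2 / (2 * (t / 2)))))
    (Metric.ball_mem_nhds t ht2)
    (.of_forall fun s => (continuous_pow_mul_gker k s y).aestronglyMeasurable)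
    (integrable_pow_mul_gker μ k ht y)
    ((continuous_const.mul (continuous_pow_mul_gker (k + 2) t y)).aestronglyMeasurable)
    (ae_of_all _ fun u s hs => ?_)
    (integrable_const _)
    (ae_of_all _ fun u s _ => ((hasDerivAt_gker_time s y u).const_mul (u ^ k)).congr_deriv
      (by ring))).2
  · rwa [integral_const_mul] at h
  · rw [Metric.mem_ball, Real.dist_eq, abs_sub_lt_iff] at hs
    rw [norm_mul, norm_neg, norm_div, norm_one, Real.norm_two, Real.norm_eq_abs]
    gcongr
    exact abs_pow_mul_gker_le (k + 2) ht2 le_rfl (by linarith)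

variable [NeZero μ]

lemma widderMoment_zero_pos : 0 < widderMoment μ 0 t y := by
  have h_nonneg : 0 ≤ fun u => u ^ 0 * gker t y u := fun u => by
    simpa [gker] using (exp_pos _).le
  have h_support : Function.support (fun u => u ^ 0 * gker t y u) = univ := by
    ext u; simp [gker, (exp_pos _).ne']
  rw [widderMoment, integral_pos_iff_support_of_nonneg h_nonneg (integrable_pow_mul_gker μ 0 ht y),
    h_support, Measure.measure_univ_pos]
  exact NeZero.ne μ

lemma hasDerivAt_posteriorMoment_space :
    HasDerivAt (fun z => posteriorMoment μ k t z)
      (posteriorMoment μ (k + 1) t y - posteriorMoment μ 1 t y * posteriorMoment μ k t y) y := by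
  have h0 := (widderMoment_zero_pos μ ht y).ne'
  refine ((hasDerivAt_widderMoment_space μ k ht y).div
    (hasDerivAt_widderMoment_space μ 0 ht y) h0).congr_deriv ?_
  simp only [posteriorMoment]
  field_simp

lemma hasDerivAt_posteriorMoment_time :
    HasDerivAt (fun s => posteriorMoment μ k s y)
      (-(1 / 2) * (posteriorMoment μ (k + 2) t y -
        posteriorMoment μ 2 t y * posteriorMoment μ k t y)) t := by
  have h0 := (widderMoment_zero_pos μ ht y).ne'
  refine ((hasDerivAt_widderMoment_time μ k ht y).div
    (hasDerivAt_widderMoment_time μ 0 ht y) h0).congr_deriv ?_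
  simp only [posteriorMoment]
  field_simp
  ring

end FiniteMeasure

theorem posterior_variance_pde_general
    (μ : Measure ℝ) [IsProbabilityMeasure μ]
    (t : ℝ) (ht : 0 < t) (y : ℝ) :
    deriv (fun s => Hp μ s y) t + (1 / 2) * iteratedDeriv 2 (fun z => Hp μ t z) y +
      Gp μ t y * deriv (fun z => Hp μ t z) y + (Hp μ t y) ^ 2 = 0 := by
  set p := fun k z => posteriorMoment μ k t z
  have hp (k : ℕ) (z : ℝ) : HasDerivAt (p k) (p (k + 1) z - p 1 z * p k z) z :=
    hasDerivAt_posteriorMoment_space μ k ht z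
  have hH_space (z : ℝ) : HasDerivAt (fun z => Hp μ t z)
      (p 3 z - 3 * p 1 z * p 2 z + 2 * p 1 z ^ 3) z := by
    simp only [Hp_eq_posteriorMoment]
    exact ((hp 2 z).sub ((hp 1 z).pow 2)).congr_deriv (by push_cast; ring)
  have hH_space2 : HasDerivAt (fun z => p 3 z - 3 * p 1 z * p 2 z + 2 * p 1 z ^ 3)
      (p 4 y - 4 * p 1 y * p 3 y - 3 * p 2 y ^ 2 + 12 * p 1 y ^ 2 * p 2 y - 6 * p 1 y ^ 4) y :=
    (((hp 3 y).sub (((hp 1 y).const_mul 3).mul (hp 2 y))).add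
      (((hp 1 y).pow 3).const_mul 2)).congr_deriv (by push_cast; ring)
  have hp_time (k : ℕ) := hasDerivAt_posteriorMoment_time μ k ht y
  have hH_time : HasDerivAt (fun s => Hp μ s y)
      (-(1 / 2) * (p 4 y - p 2 y ^ 2) + p 1 y * (p 3 y - p 1 y * p 2 y)) t := by
    simp only [Hp_eq_posteriorMoment]
    exact ((hp_time 2).sub ((hp_time 1).pow 2)).congr_deriv (by push_cast; ring)
  rw [hH_time.deriv, iteratedDeriv_succ, iteratedDeriv_one, funext fun z => (hH_space z).deriv,
    hH_space2.deriv, Gp_eq_posteriorMoment, Hp_eq_posteriorMoment]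
  ring

/-- on `(0,∞) × ℝ` the posterior variance `H` satisfies
`∂_t H + (1/2) ∂²_{yy} H + G ∂_y H + H² = 0`. -/
theorem posterior_variance_pde
    (μ : Measure ℝ) [IsProbabilityMeasure μ] (hμ2 : Integrable (fun u => u ^ 2) μ)
    (t : ℝ) (ht : 0 < t) (y : ℝ) :
    deriv (fun s => Hp μ s y) t + (1 / 2) * iteratedDeriv 2 (fun z => Hp μ t z) y +
      Gp μ t y * deriv (fun z => Hp μ t z) y + (Hp μ t y) ^ 2 = 0 :=
  posterior_variance_pde_general μ t ht y
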